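/- There exists a universal constant K > 0 such that for every n and every real n×n matrix A satisfying |∑_{i,j} A i j * s i * t j| ≤ 1 for all choices of signs s, t : Fin n → ℝ with |s i| ≤ 1 and |t j| ≤ 1, and for all unit vectors u, v : Fin n → EuclideanSpace ℝ (Fin n), one has |∑_{i,j} A i j * ⟪u i, v j⟫| ≤ K. (Grothendieck's inequality, real case.) -/

import Mathlib

open scoped RealInnerProductSpace BigOperators
open Finset

/-!
Embed each vector `x` of the unit ball into `L²` of the cube `{±1}^γ` by the Rademacher sum
`f_x ε = ∑ₖ xₖ εₖ`; this is an isometry and `𝔼 f_x⁴ ≤ 3`. Let `T` truncate at level `2`.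
Since `|y - T y| ≤ y² / 8`, the tail `f_x - T f_x` has `L²` norm at most `√3 / 8 ≤ 1 / 4`,
while the truncated functions are bounded by `2`, so pointwise in `ε` the hypothesis on `A`
bounds their contribution by `4`. Let `G` be the supremum of `|∑ Aᵢⱼ ⟪uᵢ, vⱼ⟫|` over families in
the unit balls of all finite-dimensional Euclidean spaces. Writing
`⟪u, v⟫ = ⟪T f_u, T f_v⟫ + ⟪T f_u, f_v - T f_v⟫ + ⟪f_u - T f_u, f_v⟫`, the two error terms are
bilinear values of families of norms `≤ 1` and `≤ 1 / 4`, so `G ≤ 4 + G / 4 + G / 4`, i.e. `G ≤ 8`.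
-/

namespace Grothendieck

section Rademacher

variable {γ : Type*} [DecidableEq γ]

def boolSign (b : Bool) : ℝ := if b then 1 else -1

def rademacherSum (s : Finset γ) (w : γ → ℝ) (ε : γ → Bool) : ℝ :=
  ∑ k ∈ s, w k * boolSign (ε k)

lemma boolSign_mul_self (b : Bool) : boolSign b * boolSign b = 1 := by
  cases b <;> norm_num [boolSign]

lemma boolSign_not (b : Bool) : boolSign (!b) = -boolSign b := by
  cases b <;> simp [boolSign]

variable {s : Finset γ} {a : γ}

lemma rademacherSum_insert (ha : a ∉ s) (w : γ → ℝ) (ε : γ → Bool) :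
    rademacherSum (insert a s) w ε = w a * boolSign (ε a) + rademacherSum s w ε :=
  sum_insert ha

lemma rademacherSum_update (ha : a ∉ s) (w : γ → ℝ) (ε : γ → Bool) (b : Bool) :
    rademacherSum s w (Function.update ε a b) = rademacherSum s w ε :=
  sum_congr rfl fun k hk => by rw [Function.update_of_ne (ne_of_mem_of_not_mem hk ha)]

variable [Fintype γ]

/-- Flipping the sign of coordinate `a` is a measure-preserving involution of the cube. -/
lemma expect_mul_boolSign_eq_zero (a : γ) {F : (γ → Bool) → ℝ}
    (hF : ∀ ε b, F (Function.update ε a b) = F ε) :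
    𝔼 ε, F ε * boolSign (ε a) = 0 := by
  have hflip : Function.Involutive fun ε : γ → Bool => Function.update ε a (!ε a) := by
    intro ε
    ext k
    by_cases h : k = a
    · subst h; simp
    · simp [h]
  have h := Fintype.expect_equiv hflip.toPerm (fun ε => F ε * boolSign (ε a))
    (fun ε => -(F ε * boolSign (ε a))) fun ε => by simp [hF, boolSign_not]
  rw [expect_neg_distrib] at h
  linarith

lemma expect_rademacherSum_mul (s : Finset γ) (w w' : γ → ℝ) :
    𝔼 ε, rademacherSum s w ε * rademacherSum s w' ε = ∑ k ∈ s, w k * w' k := by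
  induction s using Finset.induction_on with
  | empty => simp [rademacherSum]
  | insert a s ha ih =>
    have hexpand : ∀ ε, rademacherSum (insert a s) w ε * rademacherSum (insert a s) w' ε =
        w a * w' a + (w a * rademacherSum s w' ε + w' a * rademacherSum s w ε) * boolSign (ε a)
          + rademacherSum s w ε * rademacherSum s w' ε := fun ε => by
      rw [rademacherSum_insert ha, rademacherSum_insert ha]
      linear_combination (w a * w' a) * boolSign_mul_self (ε a)
    simp only [hexpand, expect_add_distrib, Fintype.expect_const, ih, sum_insert ha]
    rw [expect_mul_boolSign_eq_zero a fun ε b => by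
      rw [rademacherSum_update ha, rademacherSum_update ha]]
    ring

lemma expect_rademacherSum_pow_four_le (s : Finset γ) (w : γ → ℝ) :
    𝔼 ε, rademacherSum s w ε ^ 4 ≤ 3 * (∑ k ∈ s, w k ^ 2) ^ 2 := by
  induction s using Finset.induction_on with
  | empty => simp [rademacherSum]
  | insert a s ha ih =>
    set X := rademacherSum s w
    have hexpand : ∀ ε, rademacherSum (insert a s) w ε ^ 4 =
        w a ^ 4 + 6 * w a ^ 2 * (X ε * X ε)
          + (4 * w a ^ 3 * X ε + 4 * w a * X ε ^ 3) * boolSign (ε a) + X ε ^ 4 := fun ε => by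
      rw [rademacherSum_insert ha]
      linear_combination (w a ^ 4 * (boolSign (ε a) * boolSign (ε a) + 1)
        + 4 * w a ^ 3 * X ε * boolSign (ε a) + 6 * w a ^ 2 * X ε ^ 2) * boolSign_mul_self (ε a)
    have hodd : 𝔼 ε, (4 * w a ^ 3 * X ε + 4 * w a * X ε ^ 3) * boolSign (ε a) = 0 :=
      expect_mul_boolSign_eq_zero a fun ε b => by simp only [X, rademacherSum_update ha]
    have hvar : 𝔼 ε, X ε * X ε = ∑ k ∈ s, w k ^ 2 := by
      simp only [X, expect_rademacherSum_mul, sq]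
    have hQ : 0 ≤ ∑ k ∈ s, w k ^ 2 := sum_nonneg fun k _ => sq_nonneg _
    simp only [hexpand, expect_add_distrib, Fintype.expect_const, ← mul_expect, hodd, hvar,
      sum_insert ha]
    nlinarith [sq_nonneg (w a), mul_nonneg hQ (sq_nonneg (w a))]

end Rademacher

section Truncation

variable {M : ℝ}

def truncate (M x : ℝ) : ℝ := max (-M) (min M x)

lemma abs_truncate_le (hM : 0 ≤ M) (x : ℝ) : |truncate M x| ≤ M :=
  abs_le.2 ⟨le_max_left _ _, max_le (by linarith) (min_le_left _ _)⟩

lemma truncate_sq_le (hM : 0 ≤ M) (x : ℝ) : truncate M x ^ 2 ≤ x ^ 2 := by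
  unfold truncate
  rcases le_total x (-M) with h | h
  · rw [min_eq_right (by linarith), max_eq_left h]; nlinarith
  rcases le_total M x with h' | h'
  · rw [min_eq_left h', max_eq_right (by linarith)]; nlinarith
  · rw [min_eq_right h', max_eq_right h]

/-- `x - M ≤ x ^ 2 / (4 * M)` is `(x - 2 * M) ^ 2 ≥ 0`. -/
lemma abs_sub_truncate_le (hM : 0 < M) (x : ℝ) : |x - truncate M x| ≤ x ^ 2 / (4 * M) := by
  rw [le_div_iff₀ (by positivity)]
  unfold truncate
  rcases le_total x (-M) with h | h
  · rw [min_eq_right (by linarith), max_eq_left h, abs_of_nonpos (by linarith)]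
    nlinarith [sq_nonneg (x + 2 * M)]
  rcases le_total M x with h' | h'
  · rw [min_eq_left h', max_eq_right (by linarith), abs_of_nonneg (by linarith)]
    nlinarith [sq_nonneg (x - 2 * M)]
  · rw [min_eq_right h', max_eq_right h, sub_self, abs_zero, zero_mul]
    positivity

end Truncation

section L2

variable {α : Type*} [Fintype α]

/-- A function on a finite type as a vector of `L²` of the uniform probability on it. -/
noncomputable def toL2 (φ : α → ℝ) : EuclideanSpace ℝ α :=
  (√(Fintype.card α))⁻¹ • WithLp.toLp 2 φ

lemma toL2_sub (φ ψ : α → ℝ) : toL2 (φ - ψ) = toL2 φ - toL2 ψ := by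
  simp [toL2, smul_sub]

lemma inner_toL2 (φ ψ : α → ℝ) : ⟪toL2 φ, toL2 ψ⟫ = 𝔼 a, φ a * ψ a := by
  rw [toL2, toL2, real_inner_smul_left, real_inner_smul_right, Fintype.expect_eq_sum_div_card]
  simp only [PiLp.inner_apply, RCLike.inner_apply, conj_trivial, mul_comm (ψ _)]
  rw [← mul_assoc, ← mul_inv, Real.mul_self_sqrt (Nat.cast_nonneg _), inv_mul_eq_div]

lemma norm_toL2_sq (φ : α → ℝ) : ‖toL2 φ‖ ^ 2 = 𝔼 a, φ a ^ 2 := by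
  rw [← real_inner_self_eq_norm_sq, inner_toL2]; simp only [sq]

end L2

section TruncationL2

variable {α : Type*} [Fintype α] {M : ℝ}

lemma norm_toL2_truncate_le (hM : 0 ≤ M) (φ : α → ℝ) :
    ‖toL2 (truncate M ∘ φ)‖ ≤ ‖toL2 φ‖ := by
  rw [← sq_le_sq₀ (norm_nonneg _) (norm_nonneg _), norm_toL2_sq, norm_toL2_sq]
  exact expect_le_expect fun a _ => truncate_sq_le hM (φ a)

lemma norm_toL2_sub_truncate_sq_le (hM : 0 < M) (φ : α → ℝ) :
    ‖toL2 φ - toL2 (truncate M ∘ φ)‖ ^ 2 ≤ (𝔼 a, φ a ^ 4) / (4 * M) ^ 2 := by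
  rw [← toL2_sub, norm_toL2_sq, expect_div]
  refine expect_le_expect fun a _ => ?_
  calc (φ a - truncate M (φ a)) ^ 2 = |φ a - truncate M (φ a)| ^ 2 := (sq_abs _).symm
    _ ≤ (φ a ^ 2 / (4 * M)) ^ 2 := by
      gcongr
      exact abs_sub_truncate_le hM (φ a)
    _ = φ a ^ 4 / (4 * M) ^ 2 := by ring

end TruncationL2

section RademacherL2

variable {γ : Type*} [Fintype γ] [DecidableEq γ]

lemma inner_toL2_rademacherSum (x y : EuclideanSpace ℝ γ) :
    ⟪toL2 (rademacherSum univ x), toL2 (rademacherSum univ y)⟫ = ⟪x, y⟫ := by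
  rw [inner_toL2, expect_rademacherSum_mul]
  simp [PiLp.inner_apply, mul_comm]

lemma expect_rademacherSum_univ_pow_four_le (x : EuclideanSpace ℝ γ) :
    𝔼 ε, rademacherSum univ x ε ^ 4 ≤ 3 * ‖x‖ ^ 4 := by
  have hnorm : ‖x‖ ^ 2 = ∑ k, x k ^ 2 := by simp [EuclideanSpace.norm_sq_eq]
  rw [show ‖x‖ ^ 4 = (‖x‖ ^ 2) ^ 2 by ring, hnorm]
  exact expect_rademacherSum_pow_four_le univ x

lemma norm_toL2_rademacherSum (x : EuclideanSpace ℝ γ) :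
    ‖toL2 (rademacherSum univ x)‖ = ‖x‖ := by
  rw [norm_eq_sqrt_real_inner, inner_toL2_rademacherSum, ← norm_eq_sqrt_real_inner]

end RademacherL2

section HilbertNorm

variable {ι κ : Type*} [Fintype ι] [Fintype κ] (A : ι → κ → ℝ)

def innerSum {E : Type*} [NormedAddCommGroup E] [InnerProductSpace ℝ E]
    (u : ι → E) (v : κ → E) : ℝ :=
  ∑ i, ∑ j, A i j * ⟪u i, v j⟫

def hilbertValues : Set ℝ :=
  {x | ∃ (m : ℕ) (u : ι → EuclideanSpace ℝ (Fin m)) (v : κ → EuclideanSpace ℝ (Fin m)),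
    (∀ i, ‖u i‖ ≤ 1) ∧ (∀ j, ‖v j‖ ≤ 1) ∧ |innerSum A u v| = x}

noncomputable def hilbertNorm : ℝ := sSup (hilbertValues A)

lemma bddAbove_hilbertValues : BddAbove (hilbertValues A) := by
  refine ⟨∑ i, ∑ j, |A i j|, ?_⟩
  rintro x ⟨m, u, v, hu, hv, rfl⟩
  refine (abs_sum_le_sum_abs _ _).trans (sum_le_sum fun i _ => ?_)
  refine (abs_sum_le_sum_abs _ _).trans (sum_le_sum fun j _ => ?_)
  rw [abs_mul]
  refine mul_le_of_le_one_right (abs_nonneg _) ?_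
  exact (abs_real_inner_le_norm _ _).trans (mul_le_one₀ (hu i) (norm_nonneg _) (hv j))

lemma zero_mem_hilbertValues : (0 : ℝ) ∈ hilbertValues A :=
  ⟨0, 0, 0, fun _ => by simp, fun _ => by simp, by simp [innerSum]⟩

variable {A} {E : Type*} [NormedAddCommGroup E] [InnerProductSpace ℝ E] [FiniteDimensional ℝ E]

lemma abs_innerSum_le_hilbertNorm {u : ι → E} {v : κ → E} (hu : ∀ i, ‖u i‖ ≤ 1)
    (hv : ∀ j, ‖v j‖ ≤ 1) : |innerSum A u v| ≤ hilbertNorm A := by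
  let e := (stdOrthonormalBasis ℝ E).repr
  refine le_csSup (bddAbove_hilbertValues A)
    ⟨_, fun i => e (u i), fun j => e (v j), fun i => ?_, fun j => ?_, ?_⟩
  · rw [e.norm_map]; exact hu i
  · rw [e.norm_map]; exact hv j
  · simp only [innerSum, e.inner_map_map]

lemma abs_innerSum_le_mul_hilbertNorm {a b : ℝ} (ha : 0 < a) (hb : 0 < b) {u : ι → E} {v : κ → E}
    (hu : ∀ i, ‖u i‖ ≤ a) (hv : ∀ j, ‖v j‖ ≤ b) :
    |innerSum A u v| ≤ a * b * hilbertNorm A := by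
  have hscale : innerSum A u v = a * b * innerSum A (fun i => a⁻¹ • u i) (fun j => b⁻¹ • v j) := by
    simp only [innerSum, real_inner_smul_left, real_inner_smul_right, mul_sum]
    refine sum_congr rfl fun i _ => sum_congr rfl fun j _ => ?_
    field_simp
  rw [hscale, abs_mul, abs_of_pos (by positivity)]
  gcongr
  refine abs_innerSum_le_hilbertNorm (fun i => ?_) (fun j => ?_)
  · rw [norm_smul, norm_inv, Real.norm_of_nonneg ha.le, inv_mul_le_one₀ ha]; exact hu i
  · rw [norm_smul, norm_inv, Real.norm_of_nonneg hb.le, inv_mul_le_one₀ hb]; exact hv j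

end HilbertNorm

section SignBound

variable {ι κ : Type*} [Fintype ι] [Fintype κ] {A : ι → κ → ℝ}

lemma abs_sum_mul_mul_le
    (hA : ∀ (s : ι → ℝ) (t : κ → ℝ), (∀ i, |s i| ≤ 1) → (∀ j, |t j| ≤ 1) →
      |∑ i, ∑ j, A i j * s i * t j| ≤ 1)
    {M : ℝ} (hM : 0 < M) {s : ι → ℝ} {t : κ → ℝ} (hs : ∀ i, |s i| ≤ M) (ht : ∀ j, |t j| ≤ M) :
    |∑ i, ∑ j, A i j * s i * t j| ≤ M ^ 2 := by
  have hunit := hA (fun i => s i / M) (fun j => t j / M)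
    (fun i => by rw [abs_div, abs_of_pos hM, div_le_one hM]; exact hs i)
    (fun j => by rw [abs_div, abs_of_pos hM, div_le_one hM]; exact ht j)
  have hscale : ∑ i, ∑ j, A i j * s i * t j = M ^ 2 * ∑ i, ∑ j, A i j * (s i / M) * (t j / M) := by
    simp only [mul_sum]
    refine sum_congr rfl fun i _ => sum_congr rfl fun j _ => ?_
    field_simp
  rw [hscale, abs_mul, abs_of_pos (by positivity)]
  exact mul_le_of_le_one_right (by positivity) hunit

lemma abs_innerSum_toL2_le {α : Type*} [Fintype α] [Nonempty α]
    (hA : ∀ (s : ι → ℝ) (t : κ → ℝ), (∀ i, |s i| ≤ 1) → (∀ j, |t j| ≤ 1) →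
      |∑ i, ∑ j, A i j * s i * t j| ≤ 1)
    {M : ℝ} (hM : 0 < M) {φ : ι → α → ℝ} {ψ : κ → α → ℝ} (hφ : ∀ i a, |φ i a| ≤ M)
    (hψ : ∀ j a, |ψ j a| ≤ M) :
    |innerSum A (fun i => toL2 (φ i)) (fun j => toL2 (ψ j))| ≤ M ^ 2 := by
  have hexpect : innerSum A (fun i => toL2 (φ i)) (fun j => toL2 (ψ j)) =
      𝔼 a, ∑ i, ∑ j, A i j * φ i a * ψ j a := by
    simp only [innerSum, inner_toL2, mul_expect, expect_sum_comm, mul_assoc]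
  rw [hexpect]
  refine (abs_expect_le _ _).trans ?_
  exact expect_le univ_nonempty fun a _ => abs_sum_mul_mul_le hA hM (hφ · a) (hψ · a)

end SignBound

section SelfImprovement

variable {ι κ : Type*} [Fintype ι] [Fintype κ] {A : ι → κ → ℝ}

lemma abs_innerSum_le_four_add_half_hilbertNorm
    (hA : ∀ (s : ι → ℝ) (t : κ → ℝ), (∀ i, |s i| ≤ 1) → (∀ j, |t j| ≤ 1) →
      |∑ i, ∑ j, A i j * s i * t j| ≤ 1)
    {γ : Type*} [Fintype γ] [DecidableEq γ] {u : ι → EuclideanSpace ℝ γ}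
    {v : κ → EuclideanSpace ℝ γ} (hu : ∀ i, ‖u i‖ ≤ 1) (hv : ∀ j, ‖v j‖ ≤ 1) :
    |innerSum A u v| ≤ 4 + hilbertNorm A / 2 := by
  let F : EuclideanSpace ℝ γ → EuclideanSpace ℝ (γ → Bool) := fun x =>
    toL2 (rademacherSum univ x)
  let Ft : EuclideanSpace ℝ γ → EuclideanSpace ℝ (γ → Bool) := fun x =>
    toL2 (truncate 2 ∘ rademacherSum univ x)
  have hF : ∀ x, ‖x‖ ≤ 1 → ‖F x‖ ≤ 1 := fun x hx => (norm_toL2_rademacherSum x).trans_le hx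
  have hFt : ∀ x, ‖x‖ ≤ 1 → ‖Ft x‖ ≤ 1 := fun x hx =>
    (norm_toL2_truncate_le zero_le_two _).trans (hF x hx)
  have hsmall : ∀ x, ‖x‖ ≤ 1 → ‖F x - Ft x‖ ≤ 1 / 4 := fun x hx => by
    refine (sq_le_sq₀ (norm_nonneg _) (by norm_num)).1
      ((norm_toL2_sub_truncate_sq_le two_pos _).trans ?_)
    have h4 := expect_rademacherSum_univ_pow_four_le x
    have hx4 : ‖x‖ ^ 4 ≤ 1 := pow_le_one₀ (norm_nonneg _) hx
    rw [div_le_iff₀ (by norm_num)]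
    nlinarith
  have hsplit : innerSum A u v = innerSum A (fun i => Ft (u i)) (fun j => Ft (v j))
      + innerSum A (fun i => Ft (u i)) (fun j => F (v j) - Ft (v j))
      + innerSum A (fun i => F (u i) - Ft (u i)) (fun j => F (v j)) := by
    have hiso : innerSum A u v = innerSum A (fun i => F (u i)) (fun j => F (v j)) := by
      simp only [innerSum, F, inner_toL2_rademacherSum]
    rw [hiso]
    simp only [innerSum, inner_sub_left, inner_sub_right, ← sum_add_distrib, mul_sub]
    congr! 2 with i _ j _
    ring
  have hmain : |innerSum A (fun i => Ft (u i)) (fun j => Ft (v j))| ≤ 2 ^ 2 :=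
    abs_innerSum_toL2_le hA two_pos (fun _ _ => abs_truncate_le zero_le_two _)
      (fun _ _ => abs_truncate_le zero_le_two _)
  have hleft := abs_innerSum_le_mul_hilbertNorm (A := A) one_pos (by norm_num : (0 : ℝ) < 1 / 4)
    (fun i => hFt _ (hu i)) (fun j => hsmall _ (hv j))
  have hright := abs_innerSum_le_mul_hilbertNorm (A := A) (by norm_num : (0 : ℝ) < 1 / 4) one_pos
    (fun i => hsmall _ (hu i)) (fun j => hF _ (hv j))
  rw [hsplit]
  refine (abs_add_three _ _ _).trans ?_
  linarith

lemma hilbertNorm_le_eight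
    (hA : ∀ (s : ι → ℝ) (t : κ → ℝ), (∀ i, |s i| ≤ 1) → (∀ j, |t j| ≤ 1) →
      |∑ i, ∑ j, A i j * s i * t j| ≤ 1) :
    hilbertNorm A ≤ 8 := by
  have hself : hilbertNorm A ≤ 4 + hilbertNorm A / 2 :=
    csSup_le ⟨0, zero_mem_hilbertValues A⟩ fun _ ⟨_, _, _, hu, hv, hx⟩ =>
      hx ▸ abs_innerSum_le_four_add_half_hilbertNorm hA hu hv
  linarith

end SelfImprovement

end Grothendieck

theorem grothendieck_inequality_real :
    ∃ K : ℝ, 0 < K ∧ ∀ (n : ℕ) (A : Fin n → Fin n → ℝ),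
      (∀ s t : Fin n → ℝ, (∀ i, |s i| ≤ 1) → (∀ j, |t j| ≤ 1) →
        |∑ i, ∑ j, A i j * s i * t j| ≤ 1) →
      ∀ u v : Fin n → EuclideanSpace ℝ (Fin n),
        (∀ i, ‖u i‖ = 1) → (∀ j, ‖v j‖ = 1) →
        |∑ i, ∑ j, A i j * ⟪u i, v j⟫| ≤ K :=
  ⟨8, by norm_num, fun _ _ hA _ _ hu hv =>
    (Grothendieck.abs_innerSum_le_hilbertNorm (fun i => (hu i).le) (fun j => (hv j).le)).trans
      (Grothendieck.hilbertNorm_le_eight hA)⟩
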